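/- Let U ∈ R^{n1×r} and V ∈ R^{n2×r} have orthonormal columns. Define μ0 := max{ max_{1≤i≤n1} (n1/r)‖U^T e_i‖₂², max_{1≤j≤n2} (n2/r)‖V^T e_j‖₂² } (the smallest standard incoherence parameter) and μ1 := (n1 n2 / r) · max_{i,j} (UV^T)_{ij}² (the smallest joint incoherence parameter). Then μ1 ≥ μ0. -/

import Mathlib

open MeasureTheory Matrix

noncomputable section

/-- Frobenius norm of a real matrix. -/
def frobNorm {m n : ℕ} (X : Matrix (Fin m) (Fin n) ℝ) : ℝ :=
  Real.sqrt (∑ i, ∑ j, (X i j) ^ 2)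

/-- Nuclear norm: sum of singular values (square roots of eigenvalues of XᵀX). -/
def nuclearNorm {m n : ℕ} (X : Matrix (Fin m) (Fin n) ℝ) : ℝ :=
  ∑ i, Real.sqrt ((show (Xᵀ * X).IsHermitian by
    simpa [Matrix.conjTranspose_eq_transpose_of_trivial] using
      Matrix.isHermitian_conjTranspose_mul_self X).eigenvalues i)

/-- Spectral norm: operator norm of the associated Euclidean linear map. -/
def specNorm {m n : ℕ} (X : Matrix (Fin m) (Fin n) ℝ) : ℝ :=
  ‖(Matrix.toEuclideanLin X).toContinuousLinearMap‖

/-- Entrywise ℓ∞ norm. -/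
def linf {m n : ℕ} (X : Matrix (Fin m) (Fin n) ℝ) : ℝ := ⨆ i, ⨆ j, |X i j|

/-- ℓ∞,2 norm: maximum of the largest row and column ℓ₂ norms. -/
def linf2 {n : ℕ} (X : Matrix (Fin n) (Fin n) ℝ) : ℝ :=
  max (⨆ i, Real.sqrt (∑ j, (X i j) ^ 2)) (⨆ j, Real.sqrt (∑ i, (X i j) ^ 2))

/-- Operator norm (w.r.t. the Frobenius norm) of a map on n×n matrices. -/
def opNormMap {n : ℕ} (A : Matrix (Fin n) (Fin n) ℝ → Matrix (Fin n) (Fin n) ℝ) : ℝ :=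
  ⨆ Z : {Z : Matrix (Fin n) (Fin n) ℝ // frobNorm Z ≤ 1}, frobNorm (A Z.1)

/-- P_Ω for a Boolean sample ω. -/
def projB {n : ℕ} (ω : Fin n × Fin n → Bool) (Z : Matrix (Fin n) (Fin n) ℝ) :
    Matrix (Fin n) (Fin n) ℝ := fun i j => if ω (i, j) then Z i j else 0

open Classical in
/-- P_Ω for a set Ω of indices. -/
def projS {n : ℕ} (Ω : Set (Fin n × Fin n)) (Z : Matrix (Fin n) (Fin n) ℝ) :
    Matrix (Fin n) (Fin n) ℝ := fun i j => if (i, j) ∈ Ω then Z i j else 0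

/-- The tangent-space projection P_T determined by U and V. -/
def projT {n r : ℕ} (U V : Matrix (Fin n) (Fin r) ℝ) (Z : Matrix (Fin n) (Fin n) ℝ) :
    Matrix (Fin n) (Fin n) ℝ :=
  U * Uᵀ * Z + Z * V * Vᵀ - U * Uᵀ * Z * V * Vᵀ

/-- Bernoulli(p) measure on Bool. -/
def bern (p : ℝ) : Measure Bool :=
  ENNReal.ofReal p • Measure.dirac true + ENNReal.ofReal (1 - p) • Measure.dirac false

/-- Product Bernoulli(p) measure on index samples: each (i,j) observed independently
with probability p. -/
def sampleMeasure (n : ℕ) (p : ℝ) : Measure (Fin n × Fin n → Bool) :=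
  Measure.pi fun _ => bern p

/-- ℓ₂ norm of the i-th row of U, i.e. ‖Uᵀ e_i‖₂. -/
def rowNorm {n r : ℕ} (U : Matrix (Fin n) (Fin r) ℝ) (i : Fin n) : ℝ :=
  Real.sqrt (∑ k, (U i k) ^ 2)

/-! Since `Vᵀ V = 1`, the squared entries of the `i`-th row of `U Vᵀ` sum to `‖Uᵀ eᵢ‖²`; that
row has `n2` entries, each at most `max (U Vᵀ)ᵢⱼ²`. Columns are symmetric, using `Uᵀ U = 1`. -/

lemma rowNorm_sq {n r : ℕ} (U : Matrix (Fin n) (Fin r) ℝ) (i : Fin n) :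
    rowNorm U i ^ 2 = ∑ k, U i k ^ 2 :=
  Real.sq_sqrt (Finset.sum_nonneg fun _ _ => sq_nonneg _)

namespace Matrix

variable {m n r R : Type*} [Fintype r] [DecidableEq r]

lemma sum_row_sq_mul_transpose [Fintype n] [CommSemiring R] (A : Matrix m r R)
    {B : Matrix n r R} (hB : Bᵀ * B = 1) (i : m) :
    ∑ j, (A * Bᵀ) i j ^ 2 = ∑ k, A i k ^ 2 := by
  have h : (A * Bᵀ) * (A * Bᵀ)ᵀ = A * Aᵀ := by
    rw [transpose_mul, transpose_transpose, Matrix.mul_assoc, ← Matrix.mul_assoc Bᵀ, hB,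
      Matrix.one_mul]
  simpa only [mul_apply, transpose_apply, sq] using congrFun (congrFun h i) i

lemma sum_col_sq_mul_transpose [Fintype m] [CommSemiring R] {A : Matrix m r R}
    (B : Matrix n r R) (hA : Aᵀ * A = 1) (j : n) :
    ∑ i, (A * Bᵀ) i j ^ 2 = ∑ k, B j k ^ 2 := by
  rw [← sum_row_sq_mul_transpose B hA j]
  simp only [mul_apply, transpose_apply, mul_comm]

variable [Fintype m] [Fintype n] (X : Matrix m n ℝ)

lemma sq_apply_le_iSup_iSup (i : m) (j : n) : X i j ^ 2 ≤ ⨆ i, ⨆ j, X i j ^ 2 :=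
  le_ciSup_of_le (Finite.bddAbove_range _) i <|
    le_ciSup (f := fun j => X i j ^ 2) (Finite.bddAbove_range _) j

lemma sum_row_sq_le (i : m) :
    ∑ j, X i j ^ 2 ≤ Fintype.card n * ⨆ i, ⨆ j, X i j ^ 2 :=
  (Finset.sum_le_card_nsmul _ _ _ fun j _ => sq_apply_le_iSup_iSup X i j).trans_eq <| by
    rw [nsmul_eq_mul, Finset.card_univ]

lemma sum_col_sq_le (j : n) :
    ∑ i, X i j ^ 2 ≤ Fintype.card m * ⨆ i, ⨆ j, X i j ^ 2 :=
  (Finset.sum_le_card_nsmul _ _ _ fun i _ => sq_apply_le_iSup_iSup X i j).trans_eq <| by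
    rw [nsmul_eq_mul, Finset.card_univ]

end Matrix

/-- the smallest joint incoherence parameter μ1 always dominates
the smallest standard incoherence parameter μ0. -/
theorem statement15 (n1 n2 r : ℕ) (U : Matrix (Fin n1) (Fin r) ℝ)
    (V : Matrix (Fin n2) (Fin r) ℝ)
    (hU : Uᵀ * U = 1) (hV : Vᵀ * V = 1) :
    max (⨆ i, (n1 : ℝ) / r * (rowNorm U i) ^ 2) (⨆ j, (n2 : ℝ) / r * (rowNorm V j) ^ 2) ≤
      (n1 : ℝ) * n2 / r * ⨆ i, ⨆ j, ((U * Vᵀ) i j) ^ 2 := by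
  set M := ⨆ i, ⨆ j, ((U * Vᵀ) i j) ^ 2
  have hM : 0 ≤ M := Real.iSup_nonneg fun _ => Real.iSup_nonneg fun _ => sq_nonneg _
  refine max_le (Real.iSup_le (fun i => ?_) (by positivity))
    (Real.iSup_le (fun j => ?_) (by positivity))
  · rw [rowNorm_sq, ← sum_row_sq_mul_transpose U hV i]
    calc (n1 : ℝ) / r * ∑ j, (U * Vᵀ) i j ^ 2 ≤ n1 / r * (n2 * M) := by
          gcongr; simpa using sum_row_sq_le (U * Vᵀ) i
      _ = n1 * n2 / r * M := by ring
  · rw [rowNorm_sq, ← sum_col_sq_mul_transpose V hU j]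
    calc (n2 : ℝ) / r * ∑ i, (U * Vᵀ) i j ^ 2 ≤ n2 / r * (n1 * M) := by
          gcongr; simpa using sum_col_sq_le (U * Vᵀ) j
      _ = n1 * n2 / r * M := by ring

end
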